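/- arXiv:1012.0357 — 4 statements merged into one kernel-verified Lean document; each statement's English description precedes it below -/
import Mathlib

section
/- For all y > 1 and all real θ, the function κ(y,θ) = cos²θ · 4y²(1+3y²+y⁴)/(1+y⁴)² + sin²θ · 2(1+2y²+4y⁴+2y⁶+y⁸)/(1+y⁴)² satisfies 0 < κ(y,θ) < 5. -/
/-! The two coefficients are the curvatures at `θ = 0` and `θ = π/2`, and `κ(y, θ)` is their convex
combination with weights `cos² θ` and `sin² θ`; so it suffices that both lie in `(0, 5)`. With
`t = y²` the gaps to `5` factor as `(t - 1)² (5t² + 6t + 5)` and `(t - 1)² (3t² + 2t + 3)`. -/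

open Real Set

lemma cos_coeff_mem_Ioo {y : ℝ} (hy₀ : y ≠ 0) (hy₁ : y ^ 2 ≠ 1) :
    4*y^2*(1 + 3*y^2 + y^4)/(1 + y^4)^2 ∈ Ioo 0 5 := by
  have hgap : 5 * (1 + y^4)^2 - 4*y^2*(1 + 3*y^2 + y^4)
      = (y^2 - 1)^2 * (5*y^4 + 6*y^2 + 5) := by ring
  have hpos : 0 < (y^2 - 1)^2 * (5*y^4 + 6*y^2 + 5) := by
    have : y^2 - 1 ≠ 0 := sub_ne_zero.mpr hy₁
    positivity
  refine ⟨by positivity, ?_⟩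
  rw [div_lt_iff₀ (by positivity)]
  linarith

lemma sin_coeff_mem_Ioo {y : ℝ} (hy₁ : y ^ 2 ≠ 1) :
    2*(1 + 2*y^2 + 4*y^4 + 2*y^6 + y^8)/(1 + y^4)^2 ∈ Ioo 0 5 := by
  have hgap : 5 * (1 + y^4)^2 - 2*(1 + 2*y^2 + 4*y^4 + 2*y^6 + y^8)
      = (y^2 - 1)^2 * (3*y^4 + 2*y^2 + 3) := by ring
  have hpos : 0 < (y^2 - 1)^2 * (3*y^4 + 2*y^2 + 3) := by
    have : y^2 - 1 ≠ 0 := sub_ne_zero.mpr hy₁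
    positivity
  refine ⟨by positivity, ?_⟩
  rw [div_lt_iff₀ (by positivity)]
  linarith

theorem stmt1 (y θ : ℝ) (hy : 1 < y) :
    0 < Real.cos θ ^ 2 * (4*y^2*(1 + 3*y^2 + y^4)/(1 + y^4)^2)
        + Real.sin θ ^ 2 * (2*(1 + 2*y^2 + 4*y^4 + 2*y^6 + y^8)/(1 + y^4)^2) ∧
    Real.cos θ ^ 2 * (4*y^2*(1 + 3*y^2 + y^4)/(1 + y^4)^2)
        + Real.sin θ ^ 2 * (2*(1 + 2*y^2 + 4*y^4 + 2*y^6 + y^8)/(1 + y^4)^2) < 5 := by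
  have hy₀ : y ≠ 0 := by positivity
  have hy₁ : y ^ 2 ≠ 1 := (one_lt_pow₀ hy two_ne_zero).ne'
  exact convex_Ioo (0 : ℝ) 5 (cos_coeff_mem_Ioo hy₀ hy₁) (sin_coeff_mem_Ioo hy₁)
    (sq_nonneg (cos θ)) (sq_nonneg (sin θ)) (cos_sq_add_sin_sq θ)
end

section
/- For all y ≥ 1, the functions f(y) = 4y²(1+3y²+y⁴)/(1+y⁴)² and g(y) = 2(1+2y²+4y⁴+2y⁶+y⁸)/(1+y⁴)² both take values in (0,5], with f(1) = g(1) = 5, and f(y) < 5, g(y) < 5 for y > 1. -/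
/-!
With `t = y²`, both deficits factor through the double root at `t = 1`:
`5 (1 + t²)² - 4t (1 + 3t + t²) = (t - 1)² (5t² + 6t + 5)` and
`5 (1 + t²)² - 2 (1 + 2t + 4t² + 2t³ + t⁴) = (t - 1)² (3t² + 2t + 3)`,
with positive second factors. So `f, g ≤ 5` everywhere, with equality exactly at `y² = 1`.
-/

noncomputable def radialCurvature (y : ℝ) : ℝ :=
  4*y^2*(1 + 3*y^2 + y^4)/(1 + y^4)^2

noncomputable def tangentialCurvature (y : ℝ) : ℝ :=
  2*(1 + 2*y^2 + 4*y^4 + 2*y^6 + y^8)/(1 + y^4)^2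

section Curvature

variable {y : ℝ}

theorem five_sub_radialCurvature (y : ℝ) :
    5 - radialCurvature y = (y^2 - 1)^2 * (5*y^4 + 6*y^2 + 5) / (1 + y^4)^2 := by
  unfold radialCurvature
  field_simp
  ring

theorem five_sub_tangentialCurvature (y : ℝ) :
    5 - tangentialCurvature y = (y^2 - 1)^2 * (3*y^4 + 2*y^2 + 3) / (1 + y^4)^2 := by
  unfold tangentialCurvature
  field_simp
  ring

theorem radialCurvature_pos (hy : y ≠ 0) : 0 < radialCurvature y := by
  unfold radialCurvature
  positivity

theorem tangentialCurvature_pos (y : ℝ) : 0 < tangentialCurvature y := by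
  unfold tangentialCurvature
  positivity

theorem radialCurvature_le_five (y : ℝ) : radialCurvature y ≤ 5 :=
  sub_nonneg.1 <| five_sub_radialCurvature y ▸ by positivity

theorem tangentialCurvature_le_five (y : ℝ) : tangentialCurvature y ≤ 5 :=
  sub_nonneg.1 <| five_sub_tangentialCurvature y ▸ by positivity

theorem radialCurvature_lt_five (hy : y^2 ≠ 1) : radialCurvature y < 5 := by
  have : 0 < (y^2 - 1)^2 := sq_pos_of_ne_zero (sub_ne_zero.2 hy)
  exact sub_pos.1 <| five_sub_radialCurvature y ▸ by positivity

theorem tangentialCurvature_lt_five (hy : y^2 ≠ 1) : tangentialCurvature y < 5 := by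
  have : 0 < (y^2 - 1)^2 := sq_pos_of_ne_zero (sub_ne_zero.2 hy)
  exact sub_pos.1 <| five_sub_tangentialCurvature y ▸ by positivity

theorem radialCurvature_one : radialCurvature 1 = 5 := by
  norm_num [radialCurvature]

theorem tangentialCurvature_one : tangentialCurvature 1 = 5 := by
  norm_num [tangentialCurvature]

end Curvature

theorem stmt3 (y : ℝ) (hy : 1 ≤ y) :
    (0 < 4*y^2*(1 + 3*y^2 + y^4)/(1 + y^4)^2 ∧
      4*y^2*(1 + 3*y^2 + y^4)/(1 + y^4)^2 ≤ 5) ∧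
    (0 < 2*(1 + 2*y^2 + 4*y^4 + 2*y^6 + y^8)/(1 + y^4)^2 ∧
      2*(1 + 2*y^2 + 4*y^4 + 2*y^6 + y^8)/(1 + y^4)^2 ≤ 5) ∧
    (y = 1 → 4*y^2*(1 + 3*y^2 + y^4)/(1 + y^4)^2 = 5 ∧
      2*(1 + 2*y^2 + 4*y^4 + 2*y^6 + y^8)/(1 + y^4)^2 = 5) ∧
    (1 < y → 4*y^2*(1 + 3*y^2 + y^4)/(1 + y^4)^2 < 5 ∧
      2*(1 + 2*y^2 + 4*y^4 + 2*y^6 + y^8)/(1 + y^4)^2 < 5) := by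
  refine ⟨⟨radialCurvature_pos (by positivity), radialCurvature_le_five y⟩,
    ⟨tangentialCurvature_pos y, tangentialCurvature_le_five y⟩,
    ?_, fun h => ?_⟩
  · rintro rfl
    exact ⟨radialCurvature_one, tangentialCurvature_one⟩
  · have hy2 : y^2 ≠ 1 := (one_lt_pow₀ h two_ne_zero).ne'
    exact ⟨radialCurvature_lt_five hy2, tangentialCurvature_lt_five hy2⟩
end

section
/- Define r(z)·(x,y) = ((1/(2y))·(−(−x²+y²−1)sin z + 2xy cos z), (1/(2y))·((−x²+y²−1)cos z + 2xy sin z + x²+y²+1)) for z ∈ ℝ and (x,y) in the upper half-plane. Then r(z) equals the Euclidean rotation by angle z about the point (0, (1+x²+y²)/(2y)): r(z)·(x,y) = R_z·((x,y) − (0,c)) + (0,c) where c = (1+x²+y²)/(2y) and R_z is rotation by z. -/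
theorem stmt11 (z x y : ℝ) (hy : 0 < y) :
    ((1/(2*y)) * (-(-x^2 + y^2 - 1) * Real.sin z + 2*x*y*Real.cos z),
     (1/(2*y)) * ((-x^2 + y^2 - 1) * Real.cos z + 2*x*y*Real.sin z + x^2 + y^2 + 1)) =
    (Real.cos z * (x - 0) - Real.sin z * (y - (1 + x^2 + y^2)/(2*y)) + 0,
     Real.sin z * (x - 0) + Real.cos z * (y - (1 + x^2 + y^2)/(2*y)) + (1 + x^2 + y^2)/(2*y)) := by
  have hy' : (2*y) ≠ 0 := by positivity
  refine Prod.ext ?_ ?_ <;> simp only <;> field_simp <;> ring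
end

section
/- The quantity c(x,y) = (1+x²+y²)/(2y) is invariant under the rotation action: for all z, if (x',y') = R_z((x,y)−(0,c(x,y))) + (0,c(x,y)) and y' > 0, then c(x',y') = c(x,y). -/
/-!
The point `(x, y)` lies on the circle `x² + (y - c)² = c² - 1` exactly when `c = (1 + x² + y²) / (2y)`.
A rotation about `(0, c)` preserves the distance to `(0, c)`, so the rotated point stays on the same
circle and its center height is again `c`.
-/

open Real

noncomputable def centerHeight (x y : ℝ) : ℝ := (1 + x ^ 2 + y ^ 2) / (2 * y)

theorem centerHeight_eq_iff {x y : ℝ} (c : ℝ) (hy : y ≠ 0) :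
    centerHeight x y = c ↔ x ^ 2 + (y - c) ^ 2 = c ^ 2 - 1 := by
  rw [centerHeight, div_eq_iff (mul_ne_zero two_ne_zero hy)]
  constructor <;> intro h <;> linear_combination h

theorem rotation_sq_add_sq (z a b : ℝ) :
    (cos z * a - sin z * b) ^ 2 + (sin z * a + cos z * b) ^ 2 = a ^ 2 + b ^ 2 := by
  linear_combination (a ^ 2 + b ^ 2) * sin_sq_add_cos_sq z

theorem stmt13 (x y z : ℝ) (hy : 0 < y)
    (x' y' : ℝ)
    (hx' : x' = Real.cos z * x - Real.sin z * (y - (1 + x^2 + y^2)/(2*y)))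
    (hy' : y' = Real.sin z * x + Real.cos z * (y - (1 + x^2 + y^2)/(2*y))
        + (1 + x^2 + y^2)/(2*y))
    (hpos : 0 < y') :
    (1 + x'^2 + y'^2)/(2*y') = (1 + x^2 + y^2)/(2*y) := by
  set c := (1 + x ^ 2 + y ^ 2) / (2 * y) with hc
  have hcircle : x ^ 2 + (y - c) ^ 2 = c ^ 2 - 1 := (centerHeight_eq_iff c hy.ne').1 hc.symm
  have hy'_sub : y' - c = sin z * x + cos z * (y - c) := by
    rw [hy']; ring
  change centerHeight x' y' = c
  rw [centerHeight_eq_iff c hpos.ne', hx', hy'_sub, rotation_sq_add_sq, hcircle]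
end
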